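/- arXiv:0712.3334 — 3 statements merged into one kernel-verified Lean document; each statement's English description precedes it below -/
import Mathlib

section
/- Let K be a topological group with identity 1, let n ≥ 1, and let G be a subgroup of the symmetric group Σ_n of the form H × {1} where H is a subgroup of Σ_{n-1} (i.e. every permutation in G fixes the last coordinate). Then the ordered configuration space quotient F_n^G(K) = F_n(K)/G is homeomorphic to the product F_{n-1}^H(K \ {1}) × K, where F_n(X) denotes the space of n-tuples of pairwise distinct points of X and the quotient is by the permutation action on coordinates. -/
/-- The ordered configuration space of `n`-tuples of pairwise distinct points of `X`. -/
abbrev Config (X : Type*) [TopologicalSpace X] (n : ℕ) : Type _ :=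
  {f : Fin n → X // Function.Injective f}

/-- The equivalence relation on `Config X n` whose classes are the orbits of the
coordinate-permutation action of a subgroup `G ≤ Σ_n`; its quotient is `F_n^G(X)`. -/
def configSetoid (X : Type*) [TopologicalSpace X] (n : ℕ)
    (G : Subgroup (Equiv.Perm (Fin n))) : Setoid (Config X n) where
  r f g := ∃ σ ∈ G, (f : Fin n → X) = (g : Fin n → X) ∘ σ
  iseqv := by
    constructor
    · exact fun f => ⟨1, G.one_mem, rfl⟩
    · rintro f g ⟨σ, hσ, h⟩
      refine ⟨σ⁻¹, G.inv_mem hσ, funext fun i => ?_⟩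
      simp [h, Function.comp]
    · rintro f g k ⟨σ, hσ, h1⟩ ⟨τ, hτ, h2⟩
      refine ⟨τ * σ, G.mul_mem hτ hσ, funext fun i => ?_⟩
      simp [h1, h2, Function.comp, Equiv.Perm.mul_apply]

/-- `Fin n` is equivalent to the set of elements of `Fin (n+1)` different from the last one. -/
def lastEquiv (n : ℕ) : Fin n ≃ {i : Fin (n + 1) // i ≠ Fin.last n} where
  toFun i := ⟨i.castSucc, Fin.ne_of_lt (Fin.castSucc_lt_last i)⟩
  invFun i := i.1.castPred i.2
  left_inv i := by simp
  right_inv i := by simp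

/-!
Right-translating every point by the inverse of the last one,
`(k₁, …, kₙ₊₁) ↦ ((kᵢ kₙ₊₁⁻¹)ᵢ≤ₙ, kₙ₊₁)`, is a homeomorphism `Fₙ₊₁(K) ≃ₜ Fₙ(K \ {1}) × K`
which intertwines the action of `H × {1}` with that of `H` on the first factor. Quotient maps by
group actions are open, and open quotient maps are stable under products, so the composite
`Fₙ₊₁(K) → Fₙ^H(K \ {1}) × K` is a quotient map whose fibres are exactly the `G`-orbits.
-/

namespace Config

variable {X : Type*} [TopologicalSpace X] {n : ℕ}

instance : MulAction (Equiv.Perm (Fin n)) (Config X n) where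
  smul σ f := ⟨f.1 ∘ ⇑σ⁻¹, f.2.comp σ⁻¹.injective⟩
  one_smul _ := rfl
  mul_smul _ _ _ := rfl

theorem coe_smul (σ : Equiv.Perm (Fin n)) (f : Config X n) :
    ((σ • f : Config X n) : Fin n → X) = f ∘ ⇑σ⁻¹ :=
  rfl

instance : ContinuousConstSMul (Equiv.Perm (Fin n)) (Config X n) where
  continuous_const_smul σ := continuous_induced_rng.2 <|
    show Continuous fun f : Config X n => f.1 ∘ ⇑σ⁻¹ from
      continuous_pi fun _ => (continuous_apply _).comp continuous_subtype_val

instance (G : Subgroup (Equiv.Perm (Fin n))) : ContinuousConstSMul G (Config X n) where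
  continuous_const_smul σ := continuous_const_smul (σ : Equiv.Perm (Fin n))

end Config

section OrbitRel

variable {X : Type*} [TopologicalSpace X] {n : ℕ}

theorem configSetoid_eq_orbitRel (G : Subgroup (Equiv.Perm (Fin n))) :
    configSetoid X n G = MulAction.orbitRel G (Config X n) := by
  ext f g
  rw [MulAction.orbitRel_apply, MulAction.mem_orbit_iff]
  constructor
  · rintro ⟨σ, hσ, h⟩
    exact ⟨⟨σ⁻¹, G.inv_mem hσ⟩, Subtype.ext (by simp [Subgroup.smul_def, Config.coe_smul, h])⟩
  · rintro ⟨σ, rfl⟩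
    exact ⟨(σ : Equiv.Perm (Fin n))⁻¹, G.inv_mem σ.2, rfl⟩

theorem isOpenQuotientMap_quotientMk_configSetoid (G : Subgroup (Equiv.Perm (Fin n))) :
    IsOpenQuotientMap (Quotient.mk (configSetoid X n G)) := by
  rw [configSetoid_eq_orbitRel]
  exact MulAction.isOpenQuotientMap_quotientMk

end OrbitRel

namespace Equiv.Perm

variable {n : ℕ}

theorem extendDomain_lastEquiv_last (σ : Perm (Fin n)) :
    σ.extendDomain (lastEquiv n) (Fin.last n) = Fin.last n :=
  extendDomain_apply_not_subtype _ _ (by simp)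

theorem extendDomain_lastEquiv_castSucc (σ : Perm (Fin n)) (j : Fin n) :
    σ.extendDomain (lastEquiv n) j.castSucc = (σ j).castSucc :=
  extendDomain_apply_image _ _ _

theorem eq_comp_extendDomain_lastEquiv_iff {α : Type*} (f g : Fin (n + 1) → α)
    (σ : Perm (Fin n)) :
    f = g ∘ σ.extendDomain (lastEquiv n) ↔
      f (Fin.last n) = g (Fin.last n) ∧ ∀ j, f j.castSucc = g (σ j).castSucc := by
  refine ⟨fun h => ?_, fun ⟨hlast, hcast⟩ => funext fun i => ?_⟩
  · subst h
    simp [extendDomain_lastEquiv_last, extendDomain_lastEquiv_castSucc]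
  · induction i using Fin.lastCases <;>
      simp [hlast, hcast, extendDomain_lastEquiv_last, extendDomain_lastEquiv_castSucc]

end Equiv.Perm

namespace Config

variable {K : Type*} [TopologicalSpace K] [Group K] [IsTopologicalGroup K] {n : ℕ}

def splitLastHomeomorph : Config K (n + 1) ≃ₜ Config {x : K // x ≠ 1} n × K where
  toFun f :=
    (⟨fun j => ⟨f.1 j.castSucc * (f.1 (Fin.last n))⁻¹,
        mul_inv_eq_one.not.2 fun h => (Fin.castSucc_lt_last j).ne (f.2 h)⟩,
      fun i j h => Fin.castSucc_injective n <| f.2 <| mul_left_injective _ <|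
        congrArg Subtype.val h⟩,
      f.1 (Fin.last n))
  invFun p := ⟨Fin.snoc (fun j => (p.1.1 j : K) * p.2) p.2, Fin.snoc_injective_iff.2
    ⟨fun i j h => p.1.2 <| Subtype.ext <| mul_right_cancel h,
      fun ⟨j, h⟩ => (p.1.1 j).2 <| mul_eq_right.1 h⟩⟩
  left_inv f := by
    ext i
    induction i using Fin.lastCases <;> simp
  right_inv p := by
    ext <;> simp
  continuous_toFun := by
    refine .prodMk (.subtype_mk (continuous_pi fun j => .subtype_mk ?_ _) _)
      ((continuous_apply _).comp continuous_subtype_val)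
    exact ((continuous_apply _).comp continuous_subtype_val).mul
      ((continuous_apply _).comp continuous_subtype_val).inv
  continuous_invFun := by
    refine .subtype_mk (continuous_pi fun i => ?_) _
    induction i using Fin.lastCases with
    | last => simpa using continuous_snd
    | cast j =>
      simp only [Fin.snoc_castSucc]
      exact (continuous_subtype_val.comp <| (continuous_apply j).comp <|
        continuous_subtype_val.comp continuous_fst).mul continuous_snd

@[simp]
theorem splitLastHomeomorph_apply_snd (f : Config K (n + 1)) :
    (splitLastHomeomorph f).2 = f.1 (Fin.last n) :=
  rfl

@[simp]
theorem splitLastHomeomorph_apply_fst_apply (f : Config K (n + 1)) (j : Fin n) :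
    ((splitLastHomeomorph f).1.1 j : K) = f.1 j.castSucc * (f.1 (Fin.last n))⁻¹ :=
  rfl

theorem configSetoid_map_extendDomain_iff (H : Subgroup (Equiv.Perm (Fin n)))
    (f g : Config K (n + 1)) :
    configSetoid K (n + 1) (H.map (Equiv.Perm.extendDomainHom (lastEquiv n))) f g ↔
      configSetoid {x : K // x ≠ 1} n H (splitLastHomeomorph f).1 (splitLastHomeomorph g).1 ∧
        (splitLastHomeomorph f).2 = (splitLastHomeomorph g).2 := by
  simp only [splitLastHomeomorph_apply_snd]
  constructor
  · rintro ⟨_, ⟨σ, hσ, rfl⟩, h⟩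
    obtain ⟨hlast, hcast⟩ := (Equiv.Perm.eq_comp_extendDomain_lastEquiv_iff _ _ σ).1 h
    exact ⟨⟨σ, hσ, funext fun j => Subtype.ext (by simp [hlast, hcast])⟩, hlast⟩
  · rintro ⟨⟨σ, hσ, h⟩, hlast⟩
    refine ⟨_, ⟨σ, hσ, rfl⟩,
      (Equiv.Perm.eq_comp_extendDomain_lastEquiv_iff _ _ σ).2 ⟨hlast, fun j => ?_⟩⟩
    simpa [hlast] using congrArg Subtype.val (congrFun h j)

end Config

/-- If `G ≤ Σ_{n+1}` is of the form `H × {1}` with `H ≤ Σ_n` (every permutation in `G` fixes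
the last coordinate), then `F_{n+1}^G(K) ≅ F_n^H(K \ {1}) × K` for a topological group `K`. -/
theorem stmt_0 (K : Type*) [TopologicalSpace K] [Group K] [IsTopologicalGroup K]
    (n : ℕ) (H : Subgroup (Equiv.Perm (Fin n))) (G : Subgroup (Equiv.Perm (Fin (n + 1))))
    (hGH : G = H.map (Equiv.Perm.extendDomainHom (lastEquiv n))) :
    Nonempty (Quotient (configSetoid K (n + 1) G) ≃ₜ
      Quotient (configSetoid {x : K // x ≠ 1} n H) × K) := by
  subst hGH
  let q := Prod.map (Quotient.mk (configSetoid {x : K // x ≠ 1} n H)) id ∘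
    Config.splitLastHomeomorph
  have hq : IsOpenQuotientMap q :=
    ((isOpenQuotientMap_quotientMk_configSetoid H).prodMap .id).comp
      Config.splitLastHomeomorph.isOpenQuotientMap
  have hker : configSetoid K (n + 1) (H.map (Equiv.Perm.extendDomainHom (lastEquiv n))) =
      Setoid.ker q := by
    ext f g
    rw [Config.configSetoid_map_extendDomain_iff, Setoid.ker_def]
    simp [q, Prod.ext_iff, Quotient.eq]
  rw [hker]
  exact ⟨Topology.IsQuotientMap.homeomorph (f := ⟨q, hq.continuous⟩) hq.isQuotientMap⟩
end

section
/- Let p be an odd prime and n ≥ 1, m ≥ 0 integers with n - p + 3 ≤ m ≤ n + 2. Suppose g, h ≥ 0 and r ≥ 0 satisfy the Riemann–Hurwitz relation 2g - 2 = p(2h - 2) + r(p-1) with g = n(p-1)/2 and r ≥ m (r counts all branch points, including the m punctures). Then necessarily h = 0 and r = n + 2. -/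
/-!
Subtracting `2g = n(p - 1)` from the Riemann–Hurwitz relation leaves
`(n - r)(p - 1) = 2p(h - 1) + 2`. If `h ≥ 1`, then `s = n - r` is positive, and reducing
mod `p` gives `p ∣ s + 2`; but `r ≥ m ≥ n - p + 3` forces `s + 2 < p`. So `h = 0`, and then
the relation reads `(n - r)(p - 1) = -2(p - 1)`, i.e. `r = n + 2`.
-/

lemma eq_zero_of_mul_sub_one_eq {p s h : ℤ} (hp : 2 ≤ p) (hs : s ≤ p - 3) (hh : 0 ≤ h)
    (heq : s * (p - 1) = 2 * p * (h - 1) + 2) : h = 0 := by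
  by_contra hne
  have hh1 : 1 ≤ h := by omega
  have hs1 : 1 ≤ s := by nlinarith
  have hdvd : p ∣ s + 2 := ⟨s - 2 * (h - 1), by linear_combination -heq⟩
  have := Int.le_of_dvd (by omega) hdvd
  omega

theorem stmt_7_general (p : ℕ) (hp : p.Prime) (n m : ℕ)
    (hm1 : (n : ℤ) - p + 3 ≤ m)
    (g h r : ℕ) (hg : 2 * g = n * (p - 1)) (hr : m ≤ r)
    (hRH : 2 * (g : ℤ) - 2 = p * (2 * (h : ℤ) - 2) + r * ((p : ℤ) - 1)) :
    h = 0 ∧ r = n + 2 := by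
  have hp2 : (2 : ℤ) ≤ p := by exact_mod_cast hp.two_le
  have hg' : 2 * (g : ℤ) = n * ((p : ℤ) - 1) := by
    rw [← Nat.cast_one, ← Nat.cast_sub hp.one_le]
    exact_mod_cast hg
  have hrel : ((n : ℤ) - r) * ((p : ℤ) - 1) = 2 * p * ((h : ℤ) - 1) + 2 := by
    linear_combination hRH - hg'
  have hh : h = 0 := by
    have hmr : (m : ℤ) ≤ r := by exact_mod_cast hr
    exact_mod_cast eq_zero_of_mul_sub_one_eq hp2 (by omega) (Int.natCast_nonneg h) hrel
  subst hh
  have hcancel : ((n : ℤ) - r) * ((p : ℤ) - 1) = -2 * ((p : ℤ) - 1) := by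
    linear_combination hrel
  have hnr := mul_right_cancel₀ (by omega : (p : ℤ) - 1 ≠ 0) hcancel
  exact ⟨rfl, by omega⟩

/-- Riemann–Hurwitz arithmetic for odd `p` (Lemma 5.2(1)): if `g = n(p-1)/2`,
`n - p + 3 ≤ m ≤ n + 2`, `r ≥ m` and `2g - 2 = p(2h - 2) + r(p - 1)`, then `h = 0`
and `r = n + 2`. -/
theorem stmt_7 (p : ℕ) (hp : p.Prime) (hodd : Odd p) (n m : ℕ) (hn : 1 ≤ n)
    (hm1 : (n : ℤ) - p + 3 ≤ m) (hm2 : m ≤ n + 2)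
    (g h r : ℕ) (hg : 2 * g = n * (p - 1)) (hr : m ≤ r)
    (hRH : 2 * (g : ℤ) - 2 = p * (2 * (h : ℤ) - 2) + r * ((p : ℤ) - 1)) :
    h = 0 ∧ r = n + 2 :=
  stmt_7_general p hp n m hm1 g h r hg hr hRH
end

section
/- Let p be an odd prime and suppose nonnegative integers l_1,...,l_{p-1} satisfy l_1 + l_2 + ... + l_{p-1} = n + 2 with n not ≡ 0 and not ≡ -2 mod p, and l_1 + 2 l_2 + ... + (p-1) l_{p-1} ≡ 0 mod p. Then there exist nonnegative integers m_1,...,m_{p-1} with m_i ≤ l_i, Σ(l_i - m_i) = 3, and ∏_i (l_i)!/(m_i)! coprime to p. -/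
private lemma not_dvd_descFactorial (p l : ℕ) (hp : p.Prime) :
    ∀ d, d ≤ l → (∀ k, l - d < k → k ≤ l → ¬ p ∣ k) → ¬ p ∣ l.descFactorial d := by
  intro d
  induction d with
  | zero => intro _ _; simpa using hp.one_lt.ne'
  | succ d ih =>
    intro hdl hk
    rw [Nat.descFactorial_succ]
    intro hdvd
    rcases (Nat.Prime.dvd_mul hp).mp hdvd with h | h
    · exact hk (l - d) (by omega) (by omega) h
    · exact ih (by omega) (fun k h1 h2 => hk k (by omega) h2) h

/-- Combinatorial core of Corollary 5.5 (case `m = 0`): if `l_1 + ... + l_{p-1} = n + 2`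
with `p ∤ n`, `p ∤ n + 2`, and `∑ i·l_i ≡ 0 (mod p)`, then one can decrease the `l_i` by a
total of `3` to values `m_i ≤ l_i` so that the index `∏ l_i!/m_i!` is coprime to `p`. -/
theorem stmt_15 (p : ℕ) (hp : p.Prime) (hodd : Odd p) (n : ℕ)
    (l : Fin (p - 1) → ℕ)
    (hsum : ∑ i, l i = n + 2)
    (hn0 : ¬ p ∣ n) (hn2 : ¬ p ∣ n + 2)
    (hw : (∑ i : Fin (p - 1), ((i : ℕ) + 1) * l i) % p = 0) :
    ∃ m : Fin (p - 1) → ℕ, (∀ i, m i ≤ l i) ∧ (∑ i, (l i - m i)) = 3 ∧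
      Nat.Coprime (∏ i, (l i).factorial / (m i).factorial) p := by
  classical
  have hp2 : 2 ≤ p := hp.two_le
  have hpne2 : p ≠ 2 := by rintro rfl; simp [Nat.odd_iff] at hodd
  have hp3 : 3 ≤ p := by omega
  -- generic finishing lemma
  have finish : ∀ d : Fin (p - 1) → ℕ, (∀ i, d i ≤ l i) → (∑ i, d i) = 3 →
      (∀ i, ∀ k, l i - d i < k → k ≤ l i → ¬ p ∣ k) →
      ∃ m : Fin (p - 1) → ℕ, (∀ i, m i ≤ l i) ∧ (∑ i, (l i - m i)) = 3 ∧
        Nat.Coprime (∏ i, (l i).factorial / (m i).factorial) p := by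
    intro d hdle hd3 hk
    refine ⟨fun i => l i - d i, fun i => Nat.sub_le _ _, ?_, ?_⟩
    · rw [← hd3]
      exact Finset.sum_congr rfl fun i _ => Nat.sub_sub_self (hdle i)
    · apply Nat.Coprime.prod_left
      intro i _
      rw [← Nat.descFactorial_eq_div (hdle i)]
      exact Nat.coprime_comm.mp
        ((hp.coprime_iff_not_dvd).mpr (not_dvd_descFactorial p (l i) hp (d i) (hdle i) (hk i)))
  set S := Finset.univ.filter (fun i : Fin (p - 1) => ¬ p ∣ l i) with hSdef
  have hmemS : ∀ i, i ∈ S ↔ ¬ p ∣ l i := by intro i; simp [hSdef]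
  have hpos : ∀ i, ¬ p ∣ l i → 1 ≤ l i := by
    intro i h; rcases Nat.eq_zero_or_pos (l i) with h0 | h1
    · exact absurd (h0 ▸ dvd_zero p) h
    · exact h1
  -- S.card ≥ 2
  have hcard : 2 ≤ S.card := by
    by_contra hlt
    push_neg at hlt
    interval_cases h : S.card
    · -- card 0 : all divisible, p ∣ n + 2
      have hall : ∀ i, p ∣ l i := by
        intro i
        by_contra hc
        have : i ∈ S := (hmemS i).mpr hc
        simp [Finset.card_eq_zero.mp h] at this
      exact hn2 (hsum ▸ Finset.dvd_sum fun i _ => hall i)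
    · -- card 1 : contradiction with weighted sum
      obtain ⟨a, ha⟩ := Finset.card_eq_one.mp h
      have hal : ¬ p ∣ l a := (hmemS a).mp (ha ▸ Finset.mem_singleton_self a)
      have hrest : ∀ i, i ≠ a → p ∣ l i := by
        intro i hia
        by_contra hc
        have : i ∈ S := (hmemS i).mpr hc
        rw [ha, Finset.mem_singleton] at this
        exact hia this
      have hdvdsum : p ∣ ∑ i : Fin (p - 1), ((i : ℕ) + 1) * l i :=
        Nat.dvd_of_mod_eq_zero hw
      rw [← Finset.add_sum_erase _ _ (Finset.mem_univ a)] at hdvdsum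
      have hdvdrest : p ∣ ∑ i ∈ Finset.univ.erase a, ((i : ℕ) + 1) * l i :=
        Finset.dvd_sum fun i hi => Dvd.dvd.mul_left (hrest i (Finset.ne_of_mem_erase hi)) _
      have hdvda : p ∣ ((a : ℕ) + 1) * l a := (Nat.dvd_add_right hdvdrest).mp
        (by rwa [add_comm] at hdvdsum)
      rcases (Nat.Prime.dvd_mul hp).mp hdvda with h' | h'
      · have := Nat.le_of_dvd (by omega) h'
        have := a.isLt
        omega
      · exact hal h'
  -- cast facts
  have hcast : ∀ x : ℕ, ¬ p ∣ x ↔ ((x : ZMod p) ≠ 0) := by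
    intro x
    rw [Ne, ZMod.natCast_eq_zero_iff]
  rcases eq_or_lt_of_le hcard with h2 | h3
  · -- exactly two indices not divisible
    obtain ⟨a, b, hab, hSab⟩ := Finset.card_eq_two.mp h2.symm
    have ha : ¬ p ∣ l a := (hmemS a).mp (by rw [hSab]; simp)
    have hb : ¬ p ∣ l b := (hmemS b).mp (by rw [hSab]; simp)
    have hrest : ∀ i, i ≠ a → i ≠ b → p ∣ l i := by
      intro i hia hib
      by_contra hc
      have : i ∈ S := (hmemS i).mpr hc
      rw [hSab] at this
      simp at this
      tauto
    -- sum in ZMod p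
    have hsum2 : (l a : ZMod p) + (l b : ZMod p) = (n : ZMod p) + 2 := by
      have : ((∑ i, l i : ℕ) : ZMod p) = ((n + 2 : ℕ) : ZMod p) := by rw [hsum]
      push_cast at this
      rw [← this]
      rw [← Finset.sum_subset (Finset.subset_univ ({a, b} : Finset (Fin (p - 1))))]
      · rw [Finset.sum_pair hab]
      · intro i _ hi
        simp only [Finset.mem_insert, Finset.mem_singleton] at hi
        push_neg at hi
        exact (ZMod.natCast_eq_zero_iff (l i) p).mpr (hrest i hi.1 hi.2)
    have hnot11 : ¬ ((l a : ZMod p) = 1 ∧ (l b : ZMod p) = 1) := by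
      rintro ⟨h1, h2⟩
      rw [h1, h2] at hsum2
      have : (n : ZMod p) = 0 := by linear_combination -hsum2
      exact hn0 ((ZMod.natCast_eq_zero_iff n p).mp this)
    -- main subcase handler
    have main : ∀ a b : Fin (p - 1), a ≠ b → ¬ p ∣ l a → ¬ p ∣ l b →
        (l a : ZMod p) ≠ 1 →
        ∃ m : Fin (p - 1) → ℕ, (∀ i, m i ≤ l i) ∧ (∑ i, (l i - m i)) = 3 ∧
          Nat.Coprime (∏ i, (l i).factorial / (m i).factorial) p := by
      intro a b hab ha hb hla1
      have ha0 : (l a : ZMod p) ≠ 0 := (hcast (l a)).mp ha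
      have h2a : 2 ≤ l a := by
        by_contra hc
        interval_cases h : l a
        · exact ha0 Nat.cast_zero
        · exact hla1 Nat.cast_one
      have h1b : 1 ≤ l b := hpos b hb
      have ha1 : ¬ p ∣ (l a - 1) := by
        rw [hcast]
        have : ((l a - 1 : ℕ) : ZMod p) = (l a : ZMod p) - 1 := by
          push_cast [Nat.cast_sub (by omega : 1 ≤ l a)]; ring
        rw [this]
        intro hc
        exact hla1 (by linear_combination hc)
      apply finish (fun i => (if i = a then 2 else 0) + (if i = b then 1 else 0))
      · intro i
        by_cases hia : i = a
        · simpa [hia, hab] using h2a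
        · by_cases hib : i = b
          · simpa [hib, show ¬ b = a from fun h => hia (hib.trans h)] using h1b
          · simp [hia, hib]
      · rw [Finset.sum_add_distrib, Finset.sum_ite_eq' Finset.univ a (fun _ => 2),
          Finset.sum_ite_eq' Finset.univ b (fun _ => 1)]
        simp
      · intro i k hk1 hk2
        by_cases hia : i = a
        · rw [hia] at hk1 hk2
          simp [hab] at hk1
          have : k = l a ∨ k = l a - 1 := by omega
          rcases this with rfl | rfl
          · exact ha
          · exact ha1
        · by_cases hib : i = b
          · rw [hib] at hk1 hk2
            simp [show ¬ b = a from fun h => hia (hib.trans h)] at hk1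
            have : k = l b := by omega
            subst this
            exact hb
          · simp only [if_neg hia, if_neg hib] at hk1
            omega
    by_cases hla1 : (l a : ZMod p) = 1
    · exact main b a hab.symm hb ha (fun h => hnot11 ⟨hla1, h⟩)
    · exact main a b hab ha hb hla1
  · -- at least three indices not divisible
    obtain ⟨T, hTS, hT3⟩ := Finset.exists_subset_card_eq (by omega : 3 ≤ S.card)
    obtain ⟨a, b, c, hab, hac, hbc, hTabc⟩ := Finset.card_eq_three.mp hT3
    have hmem : ∀ x, x ∈ T → ¬ p ∣ l x := fun x hx => (hmemS x).mp (hTS hx)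
    have ha : ¬ p ∣ l a := hmem a (by rw [hTabc]; simp)
    have hb : ¬ p ∣ l b := hmem b (by rw [hTabc]; simp)
    have hc : ¬ p ∣ l c := hmem c (by rw [hTabc]; simp)
    have h1a := hpos a ha
    have h1b := hpos b hb
    have h1c := hpos c hc
    apply finish (fun i =>
      (if i = a then 1 else 0) + (if i = b then 1 else 0) + (if i = c then 1 else 0))
    · intro i
      by_cases hia : i = a
      · simpa [hia, hab, hac] using h1a
      · by_cases hib : i = b
        · simpa [hib, hbc, show ¬ b = a from fun h => hia (hib.trans h)] using h1b
        · by_cases hic : i = c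
          · simpa [hic, show ¬ c = a from fun h => hia (hic.trans h), show ¬ c = b from fun h => hib (hic.trans h)] using h1c
          · simp [hia, hib, hic]
    · rw [Finset.sum_add_distrib, Finset.sum_add_distrib,
        Finset.sum_ite_eq' Finset.univ a (fun _ => 1),
        Finset.sum_ite_eq' Finset.univ b (fun _ => 1),
        Finset.sum_ite_eq' Finset.univ c (fun _ => 1)]
      simp
    · intro i k hk1 hk2
      by_cases hia : i = a
      · rw [hia] at hk1 hk2
        simp [hab, hac] at hk1
        have : k = l a := by omega
        subst this; exact ha
      · by_cases hib : i = b
        · rw [hib] at hk1 hk2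
          simp [hbc, show ¬ b = a from fun h => hia (hib.trans h)] at hk1
          have : k = l b := by omega
          subst this; exact hb
        · by_cases hic : i = c
          · rw [hic] at hk1 hk2
            simp [show ¬ c = a from fun h => hia (hic.trans h), show ¬ c = b from fun h => hib (hic.trans h)] at hk1
            have : k = l c := by omega
            subst this; exact hc
          · simp only [if_neg hia, if_neg hib, if_neg hic] at hk1
            omega
end
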